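/- Let S be a countable semigroup and T a finite subset of S. Then S is ℵ₀-categorical if and only if, for every n ≥ 1, the restriction of the relation ~_{S,n} to (S \ T)^n has only finitely many equivalence classes. -/

import Mathlib

/-- Two `n`-tuples of a semigroup are automorphically equivalent if some semigroup
automorphism maps one to the other componentwise. -/
def AutRel (S : Type*) [Semigroup S] {n : ℕ} (a b : Fin n → S) : Prop :=
  ∃ φ : S ≃* S, ∀ k, φ (a k) = b k

/-- A semigroup is ℵ₀-categorical if, for every `n ≥ 1`, the action of its automorphism
group on `n`-tuples has only finitely many orbits. -/
def Aleph0Categorical (S : Type*) [Semigroup S] : Prop :=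
  ∀ n : ℕ, 1 ≤ n → ∃ t : Set (Fin n → S), t.Finite ∧
    ∀ a : Fin n → S, ∃ b ∈ t, AutRel S b a

/-!
Any tuple can be moved by a group element so that each of its coordinates with infinite orbit
avoids the finite set `T` (B. H. Neumann's lemma on coset covers, applied to the stabilizers of
those coordinates). The coordinates that stay in `T` then lie in the finite set `W` of points of
`T` with finite orbit, whose pointwise stabilizer `H` has finite index. Finitely many orbits on
tuples avoiding `T` split into finitely many `H`-orbits, and `H`-orbits of tuples avoiding `T`
determine `H`-orbits of tuples with some coordinates in `W`, since `H` fixes those coordinates.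
-/

open Set MulAction
open scoped Pointwise

instance MulAut.applyMulActionOfMul {M : Type*} [Mul M] : MulAction (MulAut M) M where
  smul f a := f a
  one_smul _ := rfl
  mul_smul _ _ _ := rfl

namespace MulAction

variable (G : Type*) {X : Type*} [Group G] [MulAction G X]

def FinitelyManyOrbitsOn (A : Set X) : Prop :=
  ∃ t : Set X, t.Finite ∧ ∀ a ∈ A, ∃ b ∈ t, ∃ g : G, g • b = a

variable {G}

theorem finiteIndex_stabilizer_iff {x : X} :
    (stabilizer G x).FiniteIndex ↔ (orbit G x).Finite := by
  rw [Subgroup.finiteIndex_iff, index_stabilizer]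
  exact ⟨finite_of_ncard_ne_zero, fun h => ((ncard_pos h).mpr ⟨x, mem_orbit_self x⟩).ne'⟩

theorem finiteIndex_fixingSubgroup {W : Set X} (hW : W.Finite)
    (horb : ∀ w ∈ W, (orbit G w).Finite) : (fixingSubgroup G W).FiniteIndex := by
  have := hW.to_subtype
  have : (⨅ w : W, stabilizer G (w : X)).FiniteIndex :=
    Subgroup.finiteIndex_iInf fun w => finiteIndex_stabilizer_iff.mpr (horb w w.2)
  refine Subgroup.finiteIndex_of_le (H := ⨅ w : W, stabilizer G (w : X)) fun g hg => ?_
  exact (mem_fixingSubgroup_iff G).mpr fun w hw => Subgroup.mem_iInf.mp hg ⟨w, hw⟩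

theorem exists_smul_notMem_of_infinite_orbit {ι : Type*} [Finite ι] {T : Set X} (hT : T.Finite)
    (x : ι → X) : ∃ g : G, ∀ i, (orbit G (x i)).Infinite → g • x i ∉ T := by
  classical
  have := Fintype.ofFinite ι
  by_contra! hcover
  -- `g p • x p.1 = p.2` whenever `p.2` lies in the orbit of `x p.1`
  let g : ι × X → G := fun p => if h : ∃ g : G, g • x p.1 = p.2 then h.choose else 1
  let s := (Finset.univ.filter fun i => (orbit G (x i)).Infinite) ×ˢ hT.toFinset
  have hcovers : ⋃ p ∈ s, g p • (stabilizer G (x p.1) : Set G) = univ := by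
    refine eq_univ_of_forall fun φ => ?_
    obtain ⟨i, hi, hφi⟩ := hcover φ
    have hex : ∃ g : G, g • x i = φ • x i := ⟨φ, rfl⟩
    refine mem_iUnion₂.mpr ⟨(i, φ • x i), by simp [s, hi, hφi], ?_⟩
    rw [mem_leftCoset_iff, SetLike.mem_coe, mem_stabilizer_iff, mul_smul, inv_smul_eq_iff]
    simp only [g, dif_pos hex, hex.choose_spec]
  obtain ⟨⟨i, y⟩, hp, hfin⟩ := Subgroup.exists_finiteIndex_of_leftCoset_cover hcovers
  exact (Finset.mem_filter.mp (Finset.mem_product.mp hp).1).2 (finiteIndex_stabilizer_iff.mp hfin)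

namespace FinitelyManyOrbitsOn

variable {A B : Set X}

theorem of_finite (hA : A.Finite) : FinitelyManyOrbitsOn G A :=
  ⟨A, hA, fun a ha => ⟨a, ha, 1, one_smul G a⟩⟩

theorem mono (h : FinitelyManyOrbitsOn G B) (hAB : A ⊆ B) : FinitelyManyOrbitsOn G A :=
  let ⟨t, ht, hcov⟩ := h
  ⟨t, ht, fun a ha => hcov a (hAB ha)⟩

theorem exists_finite_subset (h : FinitelyManyOrbitsOn G A) :
    ∃ t ⊆ A, t.Finite ∧ ∀ a ∈ A, ∃ b ∈ t, ∃ g : G, g • b = a := by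
  obtain ⟨t, ht, hcov⟩ := h
  have himage : (orbit G '' A).Finite := (ht.image _).subset <| by
    rintro _ ⟨a, ha, rfl⟩
    obtain ⟨b, hb, g, rfl⟩ := hcov a ha
    exact ⟨b, hb, (orbit_smul g b).symm⟩
  obtain ⟨t', ht'A, hbij⟩ := exists_subset_bijOn A (orbit G)
  refine ⟨t', ht'A, Set.Finite.of_finite_image (hbij.image_eq ▸ himage) hbij.injOn,
    fun a ha => ?_⟩
  obtain ⟨b, hb, hba⟩ := hbij.surjOn (mem_image_of_mem _ ha)
  obtain ⟨g, hg⟩ := mem_orbit_iff.mp (orbit_eq_iff.mp hba.symm)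
  exact ⟨b, hb, g, hg⟩

theorem of_forall_exists_smul_mem (h : FinitelyManyOrbitsOn G A)
    (hBA : ∀ b ∈ B, ∃ g : G, g • b ∈ A) : FinitelyManyOrbitsOn G B := by
  obtain ⟨t, ht, hcov⟩ := h
  refine ⟨t, ht, fun b hb => ?_⟩
  obtain ⟨g, hg⟩ := hBA b hb
  obtain ⟨c, hc, k, hk⟩ := hcov _ hg
  exact ⟨c, hc, g⁻¹ * k, by rw [mul_smul, hk, inv_smul_smul]⟩

theorem of_subgroup {H : Subgroup G} (h : FinitelyManyOrbitsOn H A) : FinitelyManyOrbitsOn G A :=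
  let ⟨t, ht, hcov⟩ := h
  ⟨t, ht, fun a ha => let ⟨b, hb, k, hk⟩ := hcov a ha; ⟨b, hb, k, hk⟩⟩

theorem of_finiteIndex (H : Subgroup G) [H.FiniteIndex] (h : FinitelyManyOrbitsOn G A) :
    FinitelyManyOrbitsOn H A := by
  obtain ⟨t, ht, hcov⟩ := h
  refine ⟨image2 (fun (q : G ⧸ H) b => q.out⁻¹ • b) univ t, finite_univ.image2 _ ht,
    fun a ha => ?_⟩
  obtain ⟨b, hb, g, rfl⟩ := hcov a ha
  obtain ⟨k, hk⟩ := QuotientGroup.mk_out_eq_mul H g⁻¹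
  refine ⟨_, mem_image2_of_mem (mem_univ ((g⁻¹ : G) : G ⧸ H)) hb, k, ?_⟩
  rw [hk, Subgroup.smul_def, ← mul_smul, mul_inv_rev, inv_inv, mul_inv_cancel_left]

theorem pi_union_of_forall_smul_eq {ι : Type*} [Finite ι] {Y W : Set X} (hW : W.Finite)
    (hY : Y.Nonempty) (hfix : ∀ g : G, ∀ w ∈ W, g • w = w)
    (h : FinitelyManyOrbitsOn G {x : ι → X | ∀ i, x i ∈ Y}) :
    FinitelyManyOrbitsOn G {x : ι → X | ∀ i, x i ∈ Y ∪ W} := by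
  classical
  have := hW.to_subtype
  obtain ⟨z, hz⟩ := hY
  obtain ⟨t, ht, hcov⟩ := h
  -- a tuple is recovered from its `W`-coordinates and the tuple with these replaced by `z`
  let patch : (ι → Option W) → (ι → X) → ι → X := fun p c i => (p i).elim (c i) Subtype.val
  refine ⟨image2 patch univ t, finite_univ.image2 _ ht, fun a ha => ?_⟩
  let p : ι → Option W := fun i => if hi : a i ∈ W then some ⟨a i, hi⟩ else none
  obtain ⟨c, hc, g, hgc⟩ := hcov (fun i => if a i ∈ W then z else a i) fun i => by
    by_cases hi : a i ∈ W
    · simpa [hi] using hz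
    · simpa [hi] using (ha i).resolve_right hi
  refine ⟨patch p c, mem_image2_of_mem (mem_univ p) hc, g, funext fun i => ?_⟩
  by_cases hi : a i ∈ W
  · simp [patch, p, hi, hfix g _ hi]
  · simpa [patch, p, hi] using congrFun hgc i

end FinitelyManyOrbitsOn

theorem finitelyManyOrbitsOn_univ_of_pi_compl {ι : Type*} [Finite ι] {T : Set X} (hT : T.Finite)
    (h : FinitelyManyOrbitsOn G {x : ι → X | ∀ i, x i ∉ T}) :
    FinitelyManyOrbitsOn G (univ : Set (ι → X)) := by
  rcases Tᶜ.eq_empty_or_nonempty with hTc | hTc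
  · have : Finite X := finite_univ_iff.mp (compl_empty_iff.mp hTc ▸ hT)
    exact .of_finite (toFinite _)
  set W := {x ∈ T | (orbit G x).Finite}
  have hW : W.Finite := hT.subset (sep_subset _ _)
  have := finiteIndex_fixingSubgroup hW fun w hw => hw.2
  have hWT : FinitelyManyOrbitsOn G {x : ι → X | ∀ i, x i ∈ Tᶜ ∪ W} :=
    ((h.of_finiteIndex _).pi_union_of_forall_smul_eq hW hTc
      fun g : fixingSubgroup G W => (mem_fixingSubgroup_iff G).mp g.2).of_subgroup
  refine hWT.of_forall_exists_smul_mem fun x _ => ?_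
  obtain ⟨g, hg⟩ := exists_smul_notMem_of_infinite_orbit (G := G) hT x
  refine ⟨g, fun i => ?_⟩
  by_cases hgi : g • x i ∈ T
  · exact .inr ⟨hgi, by rw [Pi.smul_apply, orbit_smul]; by_contra hinf; exact hg i hinf hgi⟩
  · exact .inl hgi

end MulAction

theorem autRel_iff_exists_smul_eq {S : Type*} [Semigroup S] {n : ℕ} {a b : Fin n → S} :
    AutRel S a b ↔ ∃ g : MulAut S, g • a = b :=
  exists_congr fun _ => funext_iff.symm

theorem aleph0Categorical_iff_finitelyManyOrbitsOn {S : Type*} [Semigroup S] :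
    Aleph0Categorical S ↔
      ∀ n : ℕ, 1 ≤ n → FinitelyManyOrbitsOn (MulAut S) (univ : Set (Fin n → S)) := by
  simp [Aleph0Categorical, FinitelyManyOrbitsOn, autRel_iff_exists_smul_eq]

theorem aleph0Categorical_iff_off_finite_subset (S : Type*) [Semigroup S]
    (T : Set S) (hT : T.Finite) :
    Aleph0Categorical S ↔
      ∀ n : ℕ, 1 ≤ n → ∃ t : Set (Fin n → S), t.Finite ∧
        (∀ b ∈ t, ∀ k, b k ∉ T) ∧
        ∀ a : Fin n → S, (∀ k, a k ∉ T) → ∃ b ∈ t, AutRel S b a := by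
  simp_rw [aleph0Categorical_iff_finitelyManyOrbitsOn, autRel_iff_exists_smul_eq]
  refine forall₂_congr fun n _ => ⟨fun h => ?_, fun ⟨t, ht, _, hcov⟩ => ?_⟩
  · obtain ⟨t, htT, ht, hcov⟩ := (h.mono (subset_univ {a | ∀ k, a k ∉ T})).exists_finite_subset
    exact ⟨t, ht, htT, hcov⟩
  · exact finitelyManyOrbitsOn_univ_of_pi_compl hT ⟨t, ht, hcov⟩
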